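/- arXiv:math/0108210 — 3 statements merged into one kernel-verified Lean document; each statement's English description precedes it below -/
import Mathlib

section
/- If ξ is a real number of Diophantine type (K, σ) (i.e. |ξ - p/q| ≥ K q^{-σ-2} for all integers p and positive integers q), then the denominators q_n of the convergents of the continued fraction expansion of ξ satisfy q_{n+1} = O(q_n^{σ+1}), and consequently ∑_n (log q_{n+1})/q_n < ∞, i.e. ξ is a Bruno number. -/
/-!
The `n`-th convergent `p/q` of `ξ`, with `q = q_n`, satisfies `|ξ - p/q| ≤ 1/(q_n q_{n+1})`, while
the Diophantine type gives `|ξ - p/q| ≥ K q_n^{-σ-2}`; together `q_{n+1} ≤ K⁻¹ q_n^{σ+1}`. Hence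
`log q_{n+1} / q_n ≲ (1 + log q_n) / q_n ≲ q_n^{-1/2}`, and this is summable because the
denominators grow at least like the Fibonacci numbers, i.e. geometrically.
-/

open Real
open scoped goldenRatio
open GenContFract (of)

theorem Real.goldenRatio_pow_le_two_mul_fib_succ (n : ℕ) : φ ^ n ≤ 2 * Nat.fib (n + 1) := by
  have hψ := fib_succ_sub_goldenConj_mul_fib n
  have hmono : (Nat.fib n : ℝ) ≤ Nat.fib (n + 1) := by exact_mod_cast Nat.fib_le_fib_succ
  nlinarith [neg_one_lt_goldenConj, goldenConj_neg, (Nat.fib n).cast_nonneg (α := ℝ)]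

theorem summable_rpow_neg_of_geometric_le {q : ℕ → ℝ} {c r ε : ℝ} (hc : 0 < c) (hr : 1 < r)
    (hε : 0 < ε) (hq : ∀ n, c * r ^ n ≤ q n) : Summable fun n => q n ^ (-ε) := by
  have hr₀ : 0 < r := one_pos.trans hr
  have hgeom : Summable fun n : ℕ => c ^ (-ε) * (r ^ (-ε)) ^ n :=
    (summable_geometric_of_lt_one (by positivity)
      (rpow_lt_one_of_one_lt_of_neg hr (neg_neg_of_pos hε))).mul_left _
  refine hgeom.of_nonneg_of_le (fun n => ?_) fun n => ?_
  · exact rpow_nonneg ((mul_pos hc (pow_pos hr₀ n)).le.trans (hq n)) _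
  · calc q n ^ (-ε) ≤ (c * r ^ n) ^ (-ε) :=
          rpow_le_rpow_of_nonpos (by positivity) (hq n) (neg_nonpos.2 hε.le)
      _ = c ^ (-ε) * (r ^ (-ε)) ^ n := by
          rw [mul_rpow hc.le (by positivity), rpow_pow_comm hr₀.le]

theorem summable_log_succ_div_of_le_mul_rpow {q : ℕ → ℝ} {C s ε : ℝ} (hε : ε < 1)
    (hq : ∀ n, 1 ≤ q n) (hrec : ∀ n, q (n + 1) ≤ C * q n ^ s)
    (hsum : Summable fun n => q n ^ (-ε)) :
    Summable fun n => log (q (n + 1)) / q n := by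
  have hq₀ n : 0 < q n := one_pos.trans_le (hq n)
  have hC : 0 < C :=
    pos_of_mul_pos_left ((hq₀ 1).trans_le (hrec 0)) (rpow_pos_of_pos (hq₀ 0) s).le
  refine (hsum.mul_left (|log C| + |s| / (1 - ε))).of_nonneg_of_le
    (fun n => div_nonneg (log_nonneg (hq _)) (hq₀ n).le) fun n => ?_
  have hlog : log (q (n + 1)) ≤ |log C| + |s| * log (q n) := by
    calc log (q (n + 1)) ≤ log (C * q n ^ s) := log_le_log (hq₀ _) (hrec n)
      _ = log C + s * log (q n) := by
          rw [log_mul hC.ne' (rpow_pos_of_pos (hq₀ n) s).ne', log_rpow (hq₀ n)]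
      _ ≤ |log C| + |s| * log (q n) := by
          gcongr
          · exact le_abs_self _
          · exact log_nonneg (hq n)
          · exact le_abs_self _
  have hlog_le_rpow : log (q n) ≤ q n ^ (1 - ε) / (1 - ε) :=
    log_le_rpow_div (hq₀ n).le (by linarith)
  have hinv : (q n)⁻¹ ≤ q n ^ (-ε) := by
    rw [← rpow_neg_one]
    exact rpow_le_rpow_of_exponent_le (hq n) (by linarith)
  have hdiv : q n ^ (1 - ε) / q n = q n ^ (-ε) := by
    rw [sub_eq_neg_add, rpow_add_one (hq₀ n).ne', mul_div_cancel_right₀ _ (hq₀ n).ne']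
  calc log (q (n + 1)) / q n ≤ (|log C| + |s| * (q n ^ (1 - ε) / (1 - ε))) / q n :=
        div_le_div_of_nonneg_right (hlog.trans (by gcongr)) (hq₀ n).le
    _ = |log C| * (q n)⁻¹ + |s| / (1 - ε) * (q n ^ (1 - ε) / q n) := by ring
    _ ≤ |log C| * q n ^ (-ε) + |s| / (1 - ε) * q n ^ (-ε) := by
        rw [hdiv]
        gcongr
    _ = (|log C| + |s| / (1 - ε)) * q n ^ (-ε) := by ring

namespace GenContFract

section Integrality

variable {K : Type*} [Field K] [LinearOrder K] [FloorRing K]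

theorem exists_int_pair_eq_contsAux (v : K) (n : ℕ) :
    ∃ c : Pair ℤ, (of v).contsAux n = c.map (↑) := by
  suffices ∀ n, (∃ c : Pair ℤ, (of v).contsAux n = c.map (↑)) ∧
      ∃ c : Pair ℤ, (of v).contsAux (n + 1) = c.map (↑) from (this n).1
  intro n
  induction n with
  | zero =>
    exact ⟨⟨⟨1, 0⟩, by simp [contsAux, Pair.map]⟩, ⟨⌊v⌋, 1⟩, by simp [contsAux, Pair.map]⟩
  | succ n ih =>
    obtain ⟨⟨c, hc⟩, c', hc'⟩ := ih
    refine ⟨⟨c', hc'⟩, ?_⟩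
    rcases hs : (of v).s.get? n with _ | gp
    · exact ⟨c', by rw [contsAux_stable_step_of_terminated hs, hc']⟩
    · obtain ⟨ha, z, hb⟩ := of_partNum_eq_one_and_exists_int_partDen_eq hs
      refine ⟨⟨z * c'.a + c.a, z * c'.b + c.b⟩, ?_⟩
      rw [contsAux_recurrence hs hc hc', ha, hb]
      simp [Pair.map]

theorem exists_int_nat_eq_num_den [IsStrictOrderedRing K] (v : K) (n : ℕ) :
    ∃ (p : ℤ) (q : ℕ), (of v).nums n = p ∧ (of v).dens n = q := by
  obtain ⟨⟨p, q⟩, hc⟩ := exists_int_pair_eq_contsAux v (n + 1)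
  have hnum : (of v).nums n = p := by
    rw [num_eq_conts_a, nth_cont_eq_succ_nth_contAux, hc]; rfl
  have hden : (of v).dens n = q := by
    rw [den_eq_conts_b, nth_cont_eq_succ_nth_contAux, hc]; rfl
  have hq : 0 ≤ q := by exact_mod_cast hden ▸ zero_le_of_den
  exact ⟨p, q.toNat, hnum, by rw [hden]; exact_mod_cast (Int.toNat_of_nonneg hq).symm⟩

end Integrality

section Irrational

variable {ξ : ℝ}

theorem not_terminatedAt_of_irrational (hξ : Irrational ξ) (n : ℕ) :
    ¬(of ξ).TerminatedAt n := fun h =>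
  let ⟨q, hq⟩ := (terminates_iff_rat ξ).1 ⟨n, h⟩
  hξ ⟨q, hq.symm⟩

theorem fib_succ_le_den_of_irrational (hξ : Irrational ξ) (n : ℕ) :
    (Nat.fib (n + 1) : ℝ) ≤ (of ξ).dens n :=
  succ_nth_fib_le_of_nth_den (Or.inr (not_terminatedAt_of_irrational hξ _))

theorem one_le_den_of_irrational (hξ : Irrational ξ) (n : ℕ) : 1 ≤ (of ξ).dens n :=
  le_trans (by exact_mod_cast Nat.fib_pos.2 n.succ_pos) (fib_succ_le_den_of_irrational hξ n)

theorem summable_dens_rpow_neg_of_irrational (hξ : Irrational ξ) {ε : ℝ} (hε : 0 < ε) :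
    Summable fun n => (of ξ).dens n ^ (-ε) := by
  refine summable_rpow_neg_of_geometric_le (c := 1 / 2) (by norm_num) one_lt_goldenRatio hε
    fun n => ?_
  linarith [goldenRatio_pow_le_two_mul_fib_succ n, fib_succ_le_den_of_irrational hξ n]

end Irrational

end GenContFract

open GenContFract

def HasDiophantineType (ξ K σ : ℝ) : Prop :=
  ∀ (p : ℤ) (q : ℕ), 0 < q → K * (q : ℝ) ^ (-σ - 2) ≤ |ξ - p / q|

namespace HasDiophantineType

variable {ξ K σ : ℝ}

theorem irrational (h : HasDiophantineType ξ K σ) (hK : 0 < K) : Irrational ξ := by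
  rintro ⟨r, rfl⟩
  have hr := h r.num r.den r.pos
  rw [Rat.cast_def, sub_self, abs_zero] at hr
  exact hr.not_gt (by positivity)

theorem den_succ_le (h : HasDiophantineType ξ K σ) (hK : 0 < K) (n : ℕ) :
    (of ξ).dens (n + 1) ≤ K⁻¹ * (of ξ).dens n ^ (σ + 1) := by
  have hξ := h.irrational hK
  obtain ⟨p, q, hp, hq⟩ := exists_int_nat_eq_num_den ξ n
  set B := (of ξ).dens (n + 1)
  have hq₀ : (0 : ℝ) < q := one_pos.trans_le (hq ▸ one_le_den_of_irrational hξ n)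
  have hB : 0 < B := one_pos.trans_le (one_le_den_of_irrational hξ (n + 1))
  have hupper : |ξ - p / q| ≤ 1 / (q * B) := by
    simpa only [conv_eq_num_div_den, hp, hq] using
      abs_sub_convs_le (not_terminatedAt_of_irrational hξ n)
  have hlower := h p q (by exact_mod_cast hq₀)
  have hpow : (q : ℝ) ^ (-σ - 2) * q ^ (σ + 1) * q = 1 := by
    rw [← rpow_add hq₀, ← rpow_add_one hq₀.ne', show -σ - 2 + (σ + 1) + 1 = 0 by ring, rpow_zero]
  rw [le_inv_mul_iff₀ hK, hq]
  calc K * B = K * q ^ (-σ - 2) * (q * B) * q ^ (σ + 1) := by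
        linear_combination (K * B) * hpow.symm
    _ ≤ 1 / (q * B) * (q * B) * q ^ (σ + 1) := by gcongr; exact hlower.trans hupper
    _ = q ^ (σ + 1) := by field_simp

end HasDiophantineType

theorem diophType_is_bruno_general (ξ K σ : ℝ) (hK : 0 < K)
    (h : ∀ (p : ℤ) (q : ℕ), 0 < q → |ξ - (p : ℝ) / (q : ℝ)| ≥ K * (q : ℝ) ^ (-σ - 2)) :
    (∃ C > 0, ∀ n : ℕ, (GenContFract.of ξ).dens (n + 1) ≤
        C * ((GenContFract.of ξ).dens n) ^ (σ + 1)) ∧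
      Summable (fun n : ℕ =>
        Real.log ((GenContFract.of ξ).dens (n + 1)) / (GenContFract.of ξ).dens n) := by
  have hdioph : HasDiophantineType ξ K σ := h
  have hξ := hdioph.irrational hK
  refine ⟨⟨K⁻¹, inv_pos.2 hK, hdioph.den_succ_le hK⟩, ?_⟩
  exact summable_log_succ_div_of_le_mul_rpow (ε := 1 / 2) (by norm_num)
    (one_le_den_of_irrational hξ) (hdioph.den_succ_le hK)
    (summable_dens_rpow_neg_of_irrational hξ (by norm_num))

/-- If `ξ` is of Diophantine type `(K, σ)`, then the denominators of its continued
fraction convergents satisfy `q_{n+1} = O(q_n^{σ+1})`, and hence `ξ` is a Bruno number. -/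
theorem diophType_is_bruno (ξ K σ : ℝ) (hK : 0 < K) (hσ : 0 < σ)
    (h : ∀ (p : ℤ) (q : ℕ), 0 < q → |ξ - (p : ℝ) / (q : ℝ)| ≥ K * (q : ℝ) ^ (-σ - 2)) :
    (∃ C > 0, ∀ n : ℕ, (GenContFract.of ξ).dens (n + 1) ≤
        C * ((GenContFract.of ξ).dens n) ^ (σ + 1)) ∧
      Summable (fun n : ℕ =>
        Real.log ((GenContFract.of ξ).dens (n + 1)) / (GenContFract.of ξ).dens n) :=
  diophType_is_bruno_general ξ K σ hK h
end

section
/- If the multivariable sum ∑_{q ∈ ℤ^m, q ≠ 0} |q|^{m-1} ψ(|q|)^n converges (where |q| = max_i |q_i|), then the set of m×n real matrices X for which ‖qX‖ < ψ(|q|) holds for infinitely many q ∈ ℤ^m has Lebesgue measure zero in ℝ^{mn}. -/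
/-!
The condition on `X` is invariant under integer translations, so the problem lives on the
torus `𝕋^{m×n}`, `𝕋 = ℝ/ℤ`, with its Haar probability measure; the projection from `ℝ^{m×n}`
is measure preserving on every unit cube, hence pulls null sets back to null sets. For `q ≠ 0`
the map `X ↦ qX` from `𝕋^{m×n}` onto `𝕋^n` is a continuous surjective homomorphism of compact
groups, so by uniqueness of Haar measure it is measure preserving, and `‖qX‖ < δ` has measure
at most `(2δ)^n`. As `|q|^{m-1} ≥ 1`, these bounds are summable over `q`, and Borel–Cantelli
applies.
-/

/-- Distance from a real number to the nearest integer. -/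
noncomputable def nint (x : ℝ) : ℝ := |x - round x|

/-- The height `|q| = max_i |q_i|` of an integer vector. -/
def height {m : ℕ} (q : Fin m → ℤ) : ℕ := Finset.univ.sup fun i => (q i).natAbs

open MeasureTheory Measure Set Filter

lemma nint_sum_intCast_mul {ι : Type*} [Fintype ι] (q : ι → ℤ) (x : ι → ℝ) :
    nint (∑ i, (q i : ℝ) * x i) = ‖∑ i, q i • (x i : UnitAddCircle)‖ := by
  rw [nint, ← UnitAddCircle.norm_eq]
  simp only [← zsmul_eq_mul, QuotientAddGroup.mk_sum, QuotientAddGroup.mk_zsmul]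

lemma one_le_height {m : ℕ} {q : Fin m → ℤ} (hq : q ≠ 0) : 1 ≤ height q := by
  obtain ⟨i, hi⟩ := Function.ne_iff.mp hq
  exact (Int.natAbs_pos.mpr hi).trans_le
    (Finset.le_sup (f := fun i => (q i).natAbs) (Finset.mem_univ i))

theorem measure_setOf_infinite_eq_zero {α ι : Type*} [MeasurableSpace α] [Countable ι]
    {μ : Measure α} {s : ι → Set α} (hs : ∑' i, μ (s i) ≠ ⊤) :
    μ {x | {i | x ∈ s i}.Infinite} = 0 := by
  convert measure_limsup_cofinite_eq_zero hs using 2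
  ext x
  simp [mem_limsup_iff_frequently_mem, frequently_cofinite_iff_infinite]

theorem AddMonoidHom.measurePreserving_of_surjective {G H : Type*} [AddGroup G]
    [TopologicalSpace G] [ContinuousAdd G] [MeasurableSpace G]
    [BorelSpace G] [AddGroup H] [TopologicalSpace H] [IsTopologicalAddGroup H]
    [LocallyCompactSpace H] [MeasurableSpace H] [BorelSpace H]
    (μ : Measure G) [IsAddHaarMeasure μ] [IsProbabilityMeasure μ]
    (ν : Measure H) [IsAddHaarMeasure ν] [IsProbabilityMeasure ν]
    (f : G →+ H) (hf : Continuous f) (hsurj : Function.Surjective f) :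
    MeasurePreserving f μ ν := by
  have := isAddHaarMeasure_map_of_isFiniteMeasure μ f hf hsurj
  have := isProbabilityMeasure_map (μ := μ) hf.aemeasurable
  exact ⟨hf.measurable, isAddHaarMeasure_eq_of_isProbabilityMeasure _ _⟩

theorem measurePreserving_pi_restrict_pi {ι : Type*} [Fintype ι] {α β : ι → Type*}
    [∀ i, MeasurableSpace (α i)] [∀ i, MeasurableSpace (β i)] {μ : ∀ i, Measure (α i)}
    [∀ i, SigmaFinite (μ i)] {ν : ∀ i, Measure (β i)} [∀ i, SigmaFinite (ν i)]
    {f : ∀ i, α i → β i} {s : ∀ i, Set (α i)}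
    (hf : ∀ i, MeasurePreserving (f i) ((μ i).restrict (s i)) (ν i)) :
    MeasurePreserving (fun a i => f i (a i)) ((Measure.pi μ).restrict (univ.pi s))
      (Measure.pi ν) := by
  rw [restrict_pi_pi]
  exact measurePreserving_pi _ _ hf

namespace UnitAddCircle

instance : IsProbabilityMeasure (volume : Measure UnitAddCircle) :=
  ⟨UnitAddCircle.measure_univ⟩

-- Instance search does not find this through the nested `Pi` types.
instance {ι κ : Type*} [Fintype ι] [Fintype κ] :
    IsAddHaarMeasure (volume : Measure (ι → κ → UnitAddCircle)) :=
  pi.isAddHaarMeasure _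

lemma zsmul_surjective {a : ℤ} (ha : a ≠ 0) :
    Function.Surjective fun x : UnitAddCircle => a • x := by
  intro y
  obtain ⟨t, rfl⟩ := QuotientAddGroup.mk_surjective y
  refine ⟨((t / a : ℝ) : UnitAddCircle), ?_⟩
  change a • ((t / a : ℝ) : UnitAddCircle) = t
  rw [← AddCircle.coe_zsmul, zsmul_eq_mul, mul_div_cancel₀ _ (by exact_mod_cast ha)]

lemma volume_pi_ball_zero_le (κ : Type*) [Fintype κ] (δ : ℝ) :
    volume (univ.pi fun _ : κ => Metric.ball (0 : UnitAddCircle) δ) ≤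
      ENNReal.ofReal (2 * δ) ^ Fintype.card κ := by
  rw [volume_pi_pi, ← Finset.card_univ, ← Finset.prod_const]
  gcongr
  calc volume (Metric.ball (0 : UnitAddCircle) δ)
      ≤ volume (Metric.closedBall (0 : UnitAddCircle) δ) :=
        measure_mono Metric.ball_subset_closedBall
    _ = ENNReal.ofReal (min 1 (2 * δ)) := AddCircle.volume_closedBall 1 δ
    _ ≤ ENNReal.ofReal (2 * δ) := ENNReal.ofReal_le_ofReal (min_le_right _ _)

variable {ι κ : Type*} [Fintype ι]

/-- The map `X ↦ qX` on the torus of `ι × κ` matrices. -/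
def zsmulSumHom (q : ι → ℤ) : (ι → κ → UnitAddCircle) →+ (κ → UnitAddCircle) where
  toFun X j := ∑ i, q i • X i j
  map_zero' := by ext; simp
  map_add' X Y := by ext; simp [Finset.sum_add_distrib]

lemma continuous_zsmulSumHom (q : ι → ℤ) : Continuous (zsmulSumHom (κ := κ) q) := by
  simp only [zsmulSumHom, AddMonoidHom.coe_mk, ZeroHom.coe_mk]
  fun_prop

lemma zsmulSumHom_surjective {q : ι → ℤ} (hq : q ≠ 0) :
    Function.Surjective (zsmulSumHom (κ := κ) q) := by
  classical
  obtain ⟨i₀, hi₀⟩ := Function.ne_iff.mp hq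
  choose x hx using zsmul_surjective hi₀
  intro y
  refine ⟨Pi.single i₀ fun j => x (y j), funext fun j => ?_⟩
  simp [zsmulSumHom, Pi.single_apply, apply_ite (fun f : κ → UnitAddCircle => f j), smul_ite, hx]

lemma volume_setOf_forall_norm_sum_zsmul_lt_le [Fintype κ] {q : ι → ℤ} (hq : q ≠ 0) (δ : ℝ) :
    volume {X : ι → κ → UnitAddCircle | ∀ j, ‖∑ i, q i • X i j‖ < δ} ≤
      ENNReal.ofReal (2 * δ) ^ Fintype.card κ := by
  have hmp := (zsmulSumHom q).measurePreserving_of_surjective volume volume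
    (continuous_zsmulSumHom q) (zsmulSumHom_surjective (κ := κ) hq)
  have hpre : {X : ι → κ → UnitAddCircle | ∀ j, ‖∑ i, q i • X i j‖ < δ} =
      zsmulSumHom q ⁻¹' univ.pi fun _ => Metric.ball 0 δ := by
    ext X; simp [zsmulSumHom]
  rw [hpre, hmp.measure_preimage
    (MeasurableSet.univ_pi fun _ => Metric.isOpen_ball.measurableSet).nullMeasurableSet]
  exact volume_pi_ball_zero_le κ δ

theorem volume_setOf_infinite_norm_sum_zsmul_lt_eq_zero [Fintype κ] (δ : (ι → ℤ) → ℝ)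
    (hδ : ∀ q, 0 ≤ δ q)
    (hsum : Summable fun q : {q : ι → ℤ // q ≠ 0} => δ q ^ Fintype.card κ) :
    volume {X : ι → κ → UnitAddCircle |
      {q : ι → ℤ | q ≠ 0 ∧ ∀ j, ‖∑ i, q i • X i j‖ < δ q}.Infinite} = 0 := by
  set s : (ι → ℤ) → Set (ι → κ → UnitAddCircle) :=
    fun q => {X | q ≠ 0 ∧ ∀ j, ‖∑ i, q i • X i j‖ < δ q}
  refine measure_setOf_infinite_eq_zero (s := s) ?_
  have hsupp : Function.support (fun q => volume (s q)) ⊆ {q | q ≠ 0} :=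
    fun q hq (h0 : q = 0) => hq (by simp [s, h0])
  rw [← tsum_subtype_eq_of_support_subset hsupp]
  refine ne_top_of_le_ne_top ?_ (ENNReal.tsum_le_tsum fun q : {q : ι → ℤ // q ≠ 0} =>
    (measure_mono fun X hX => hX.2).trans (volume_setOf_forall_norm_sum_zsmul_lt_le q.2 (δ q)))
  simp_rw [← ENNReal.ofReal_pow (mul_nonneg zero_le_two (hδ _)), mul_pow]
  change ∑' q : {q : ι → ℤ // q ≠ 0}, _ ≠ ⊤
  rw [← ENNReal.ofReal_tsum_of_nonneg
    (fun q => mul_nonneg (pow_nonneg zero_le_two _) (pow_nonneg (hδ _) _)) (hsum.mul_left _)]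
  exact ENNReal.ofReal_ne_top

theorem quasiMeasurePreserving_coe_pi_pi [Fintype κ] :
    QuasiMeasurePreserving (fun (X : ι → κ → ℝ) i j => (X i j : UnitAddCircle))
      volume volume := by
  let cube (t : ι → κ → ℤ) : Set (ι → κ → ℝ) :=
    univ.pi fun i => univ.pi fun j => Ioc (t i j : ℝ) (t i j + 1)
  have hcube (t) : MeasurePreserving (fun (X : ι → κ → ℝ) i j => (X i j : UnitAddCircle))
      (volume.restrict (cube t)) volume :=
    measurePreserving_pi_restrict_pi fun i =>
      measurePreserving_pi_restrict_pi fun j => UnitAddCircle.measurePreserving_mk _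
  have hcover : ⋃ t, cube t = univ := by
    refine eq_univ_of_forall fun X => mem_iUnion.mpr ⟨fun i j => ⌈X i j⌉ - 1, ?_⟩
    simp only [cube, Set.mem_univ_pi, mem_Ioc, Int.cast_sub, Int.cast_one, sub_add_cancel]
    exact fun i j => ⟨by linarith [Int.ceil_lt_add_one (X i j)], Int.le_ceil _⟩
  refine ⟨(hcube 0).measurable, AbsolutelyContinuous.mk fun S hS hS0 => ?_⟩
  rw [map_apply (hcube 0).measurable hS, ← inter_univ (_ ⁻¹' S), ← hcover, inter_iUnion]
  refine measure_iUnion_null fun t => ?_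
  rw [← restrict_apply' (MeasurableSet.univ_pi fun i => MeasurableSet.univ_pi fun j =>
    measurableSet_Ioc)]
  exact (hcube t).quasiMeasurePreserving.preimage_null hS0

end UnitAddCircle

theorem khintchine_groshev_convergence_general (m n : ℕ)
    (ψ : ℕ → ℝ) (hψ : ∀ q, 0 ≤ ψ q)
    (hsum : Summable fun q : {q : Fin m → ℤ // q ≠ 0} =>
      ((height q.1 : ℝ)) ^ (m - 1) * (ψ (height q.1)) ^ n) :
    MeasureTheory.volume
      {X : Fin m → Fin n → ℝ |
        {q : Fin m → ℤ | q ≠ 0 ∧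
          ∀ j : Fin n, nint (∑ i, (q i : ℝ) * X i j) < ψ (height q)}.Infinite} = 0 := by
  have hsum' : Summable fun q : {q : Fin m → ℤ // q ≠ 0} =>
      ψ (height q.1) ^ Fintype.card (Fin n) := by
    rw [Fintype.card_fin]
    refine hsum.of_nonneg_of_le (fun q => pow_nonneg (hψ _) n) fun q =>
      le_mul_of_one_le_left (pow_nonneg (hψ _) n) (one_le_pow₀ ?_)
    exact_mod_cast one_le_height q.2
  have htorus := UnitAddCircle.volume_setOf_infinite_norm_sum_zsmul_lt_eq_zero
    (fun q => ψ (height q)) (fun q => hψ _) hsum'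
  simpa only [preimage_ofPred_eq, nint_sum_intCast_mul] using
    UnitAddCircle.quasiMeasurePreserving_coe_pi_pi.preimage_null htorus

/-- Convergence half of the Khintchine–Groshev theorem. -/
theorem khintchine_groshev_convergence (m n : ℕ) (hm : 0 < m) (hn : 0 < n)
    (ψ : ℕ → ℝ) (hψ : ∀ q, 0 ≤ ψ q)
    (hsum : Summable fun q : {q : Fin m → ℤ // q ≠ 0} =>
      ((height q.1 : ℝ)) ^ (m - 1) * (ψ (height q.1)) ^ n) :
    MeasureTheory.volume
      {X : Fin m → Fin n → ℝ |
        {q : Fin m → ℤ | q ≠ 0 ∧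
          ∀ j : Fin n, nint (∑ i, (q i : ℝ) * X i j) < ψ (height q)}.Infinite} = 0 :=
  khintchine_groshev_convergence_general m n ψ hψ hsum
end

section
/- Suppose a : ℝ → ℂ is 1-periodic with Fourier coefficients a_k satisfying |a_k| < δ e^{-|k|ε} for all k ∈ ℤ and some δ, ε > 0, a_0 = 0, and ρ ∈ ℝ satisfies ‖kρ‖ ≥ K|k|^{-v} for all nonzero k ∈ ℤ and some K, v > 0. Then the series ∑_{k≠0} |a_k| / |e^{2πikρ} - 1| converges, so the formal solution h⁰ of the cohomological equation h⁰(t+ρ) − h⁰(t) = a(t), with Fourier coefficients h⁰_k = a_k/(e^{2πikρ} − 1), defines a continuous 1-periodic function. -/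
/-!
Since `|e^{2πiy} - 1| = 2|sin πy| ≥ 4‖y‖` (Jordan's inequality), the Diophantine condition bounds
the small divisors from below by `4K|k|^{-v}`, so `|c_k| / |e^{2πikρ} - 1| ≤ (δ / 4K) |k|^v e^{-|k|ε}`,
which is summable. The series for `h` therefore converges uniformly, and termwise
`e^{2πik(t+ρ)} - e^{2πikt} = (e^{2πikρ} - 1) e^{2πikt}` cancels the divisor.
-/

open Complex

theorem norm_cexp_two_pi_I_mul_sub_one (y : ℝ) :
    ‖exp (2 * Real.pi * I * y) - 1‖ = 2 * |Real.sin (Real.pi * y)| := by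
  rw [show 2 * (Real.pi : ℂ) * I * y = I * ((2 * Real.pi * y : ℝ) : ℂ) by push_cast; ring,
    norm_exp_I_mul_ofReal_sub_one, norm_mul, Real.norm_two, Real.norm_eq_abs]
  ring_nf

theorem two_mul_abs_sub_round_le_abs_sin_pi_mul (y : ℝ) :
    2 * |y - round y| ≤ |Real.sin (Real.pi * y)| := by
  have hsin : |Real.sin (Real.pi * y)| = |Real.sin (Real.pi * (y - round y))| := by
    rw [mul_sub, mul_comm Real.pi (round y : ℝ), Real.sin_sub_int_mul_pi, abs_mul,
      abs_neg_one_zpow, one_mul]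
  have hsmall : |Real.pi * (y - round y)| ≤ Real.pi / 2 := by
    rw [abs_mul, abs_of_pos Real.pi_pos]
    nlinarith [abs_sub_round y, Real.pi_pos]
  calc 2 * |y - round y| = 2 / Real.pi * |Real.pi * (y - round y)| := by
        rw [abs_mul, abs_of_pos Real.pi_pos]; field_simp
    _ ≤ |Real.sin (Real.pi * (y - round y))| := Real.mul_abs_le_abs_sin hsmall
    _ = |Real.sin (Real.pi * y)| := hsin.symm

theorem cexp_two_pi_I_int_mul (k : ℤ) (x : ℝ) :
    exp (2 * Real.pi * I * k * x) = exp (2 * Real.pi * I * ((k * x : ℝ) : ℂ)) := by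
  push_cast; ring_nf

theorem norm_cexp_two_pi_I_int_mul (k : ℤ) (x : ℝ) :
    ‖exp (2 * Real.pi * I * k * x)‖ = 1 := by
  rw [cexp_two_pi_I_int_mul, show 2 * (Real.pi : ℂ) * I * ((k * x : ℝ) : ℂ)
    = ((2 * Real.pi * (k * x) : ℝ) : ℂ) * I by push_cast; ring, norm_exp_ofReal_mul_I]

theorem four_mul_abs_sub_round_le_norm_cexp_sub_one (k : ℤ) (x : ℝ) :
    4 * |k * x - round (k * x)| ≤ ‖exp (2 * Real.pi * I * k * x) - 1‖ := by
  rw [cexp_two_pi_I_int_mul, norm_cexp_two_pi_I_mul_sub_one]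
  linarith [two_mul_abs_sub_round_le_abs_sin_pi_mul (k * x)]

theorem summable_rpow_mul_exp_neg_mul_nat (v : ℝ) {ε : ℝ} (hε : 0 < ε) :
    Summable fun n : ℕ => (n : ℝ) ^ v * Real.exp (-n * ε) := by
  have hgeom : Summable fun n : ℕ => Real.exp (-(ε / 2) * n) := by
    simpa only [mul_comm (-(ε / 2))] using
      Real.summable_exp_nat_mul_iff.mpr (by linarith : -(ε / 2) < 0)
  -- `n^v e^{-nε} = (n^v e^{-nε/2}) e^{-nε/2}`, and the first factor tends to `0`.
  refine summable_of_isBigO_nat hgeom ?_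
  have hbdd := ((tendsto_rpow_mul_exp_neg_mul_atTop_nhds_zero v (ε / 2) (by positivity)).comp
    tendsto_natCast_atTop_atTop).isBigO_one ℝ
  have hgeom_refl := Asymptotics.isBigO_refl (fun n : ℕ => Real.exp (-(ε / 2) * n)) Filter.atTop
  refine ((hbdd.mul hgeom_refl).congr_left fun n => ?_).congr_right fun n => one_mul _
  simp only [Function.comp_apply]
  rw [mul_assoc, ← Real.exp_add]
  ring_nf

theorem summable_abs_rpow_mul_exp_neg_mul (v : ℝ) {ε : ℝ} (hε : 0 < ε) :
    Summable fun k : ℤ => |(k : ℝ)| ^ v * Real.exp (-|(k : ℝ)| * ε) := by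
  refine .of_nat_of_neg ?_ ?_ <;>
    simpa using summable_rpow_mul_exp_neg_mul_nat v hε

section TrigonometricSeries

variable {ι : Type*} (b : ι → ℂ) (n : ι → ℤ)

theorem summable_mul_cexp (hb : Summable fun i => ‖b i‖) (t : ℝ) :
    Summable fun i => b i * exp (2 * Real.pi * I * n i * t) :=
  .of_norm (by simpa only [norm_mul, norm_cexp_two_pi_I_int_mul, mul_one] using hb)

theorem continuous_tsum_mul_cexp (hb : Summable fun i => ‖b i‖) :
    Continuous fun t : ℝ => ∑' i, b i * exp (2 * Real.pi * I * n i * t) :=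
  continuous_tsum (fun i => by fun_prop) hb fun i t => by
    rw [norm_mul, norm_cexp_two_pi_I_int_mul, mul_one]

theorem tsum_mul_cexp_add_one (t : ℝ) :
    ∑' i, b i * exp (2 * Real.pi * I * n i * ((t + 1 : ℝ) : ℂ)) =
      ∑' i, b i * exp (2 * Real.pi * I * n i * t) := by
  refine tsum_congr fun i => ?_
  rw [ofReal_add, ofReal_one, mul_add_one, exp_add, mul_comm (2 * Real.pi * I),
    exp_int_mul_two_pi_mul_I, mul_one]

theorem tsum_mul_cexp_add_sub (hb : Summable fun i => ‖b i‖) (t s : ℝ) :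
    ∑' i, b i * exp (2 * Real.pi * I * n i * ((t + s : ℝ) : ℂ)) -
        ∑' i, b i * exp (2 * Real.pi * I * n i * t) =
      ∑' i, b i * (exp (2 * Real.pi * I * n i * s) - 1) * exp (2 * Real.pi * I * n i * t) := by
  rw [← (summable_mul_cexp b n hb _).tsum_sub (summable_mul_cexp b n hb _)]
  refine tsum_congr fun i => ?_
  rw [ofReal_add, mul_add, exp_add]
  ring

end TrigonometricSeries

theorem norm_cexp_two_pi_I_int_mul_sub_one_pos {K v ρ : ℝ} (hK : 0 < K) {k : ℤ} (hk : k ≠ 0)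
    (hdioph : K * |(k : ℝ)| ^ (-v) ≤ |k * ρ - round (k * ρ)|) :
    0 < ‖exp (2 * Real.pi * I * k * ρ) - 1‖ := by
  have : 0 < |(k : ℝ)| := abs_pos.mpr (Int.cast_ne_zero.mpr hk)
  linarith [four_mul_abs_sub_round_le_norm_cexp_sub_one k ρ,
    (by positivity : 0 < K * |(k : ℝ)| ^ (-v))]

theorem summable_norm_div_norm_cexp_sub_one {c : ℤ → ℂ} {δ ε K v ρ : ℝ}
    (hε : 0 < ε) (hK : 0 < K)
    (hdecay : ∀ k : ℤ, ‖c k‖ ≤ δ * Real.exp (-|(k : ℝ)| * ε))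
    (hdioph : ∀ k : ℤ, k ≠ 0 → K * |(k : ℝ)| ^ (-v) ≤ |k * ρ - round (k * ρ)|) :
    Summable fun k : {k : ℤ // k ≠ 0} => ‖c k.1‖ / ‖exp (2 * Real.pi * I * k.1 * ρ) - 1‖ := by
  refine .of_nonneg_of_le (fun _ => by positivity) (fun ⟨k, hk⟩ => ?_)
    (((summable_abs_rpow_mul_exp_neg_mul v hε).mul_left (δ / (4 * K))).subtype _)
  have hk' : 0 < |(k : ℝ)| := abs_pos.mpr (Int.cast_ne_zero.mpr hk)
  calc ‖c k‖ / ‖exp (2 * Real.pi * I * k * ρ) - 1‖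
      ≤ δ * Real.exp (-|(k : ℝ)| * ε) / (4 * (K * |(k : ℝ)| ^ (-v))) :=
        div_le_div₀ ((norm_nonneg _).trans (hdecay k)) (hdecay k) (by positivity)
          (by linarith [hdioph k hk, four_mul_abs_sub_round_le_norm_cexp_sub_one k ρ])
    _ = δ / (4 * K) * (|(k : ℝ)| ^ v * Real.exp (-|(k : ℝ)| * ε)) := by
        rw [Real.rpow_neg hk'.le]
        field_simp

open Complex in
theorem cohomological_equation_solution_general
    (a : ℝ → ℂ) (c : ℤ → ℂ) (δ ε K v : ℝ) (hε : 0 < ε)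
    (hK : 0 < K) (ρ : ℝ)
    (hFourier : ∀ t : ℝ, a t = ∑' k : ℤ, c k * exp (2 * Real.pi * I * k * t))
    (hc0 : c 0 = 0)
    (hdecay : ∀ k : ℤ, ‖c k‖ < δ * Real.exp (-(|k| : ℝ) * ε))
    (hdioph : ∀ k : ℤ, k ≠ 0 → |(k : ℝ) * ρ - round ((k : ℝ) * ρ)| ≥ K * (|k| : ℝ) ^ (-v)) :
    Summable (fun k : {k : ℤ // k ≠ 0} =>
        ‖c k.1‖ / ‖exp (2 * Real.pi * I * k.1 * ρ) - 1‖) ∧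
      ∀ h : ℝ → ℂ,
        (h = fun t : ℝ => ∑' k : {k : ℤ // k ≠ 0},
            c k.1 / (exp (2 * Real.pi * I * k.1 * ρ) - 1) * exp (2 * Real.pi * I * k.1 * (t : ℂ))) →
        Continuous h ∧ (∀ t, h (t + 1) = h t) ∧ ∀ t, h (t + ρ) - h t = a t := by
  have hsum := summable_norm_div_norm_cexp_sub_one hε hK (fun k => (hdecay k).le) hdioph
  have hne (k : {k : ℤ // k ≠ 0}) : exp (2 * Real.pi * I * k.1 * ρ) - 1 ≠ 0 :=
    norm_pos_iff.mp (norm_cexp_two_pi_I_int_mul_sub_one_pos hK k.2 (hdioph k k.2))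
  have hb : Summable fun k : {k : ℤ // k ≠ 0} =>
      ‖c k.1 / (exp (2 * Real.pi * I * k.1 * ρ) - 1)‖ := by
    simpa only [norm_div] using hsum
  refine ⟨hsum, fun h hh => ?_⟩
  subst hh
  refine ⟨continuous_tsum_mul_cexp _ _ hb, tsum_mul_cexp_add_one _ _, fun t => ?_⟩
  have hsupp :
      Function.support (fun k : ℤ => c k * exp (2 * Real.pi * I * k * t)) ⊆ {k | k ≠ 0} :=
    fun k hk hk0 => hk (by simp [hk0, hc0])
  refine (tsum_mul_cexp_add_sub _ _ hb t ρ).trans ?_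
  rw [hFourier, ← tsum_subtype_eq_of_support_subset hsupp]
  refine tsum_congr fun k => ?_
  rw [div_mul_cancel₀ _ (hne k)]

open Complex in
/-- Solution of the cohomological equation under a Diophantine condition on `ρ`. -/
theorem cohomological_equation_solution
    (a : ℝ → ℂ) (c : ℤ → ℂ) (δ ε K v : ℝ) (hδ : 0 < δ) (hε : 0 < ε)
    (hK : 0 < K) (hv : 0 < v) (ρ : ℝ)
    (hper : ∀ t, a (t + 1) = a t)
    (hFourier : ∀ t : ℝ, a t = ∑' k : ℤ, c k * exp (2 * Real.pi * I * k * t))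
    (hc0 : c 0 = 0)
    (hdecay : ∀ k : ℤ, ‖c k‖ < δ * Real.exp (-(|k| : ℝ) * ε))
    (hdioph : ∀ k : ℤ, k ≠ 0 → |(k : ℝ) * ρ - round ((k : ℝ) * ρ)| ≥ K * (|k| : ℝ) ^ (-v)) :
    Summable (fun k : {k : ℤ // k ≠ 0} =>
        ‖c k.1‖ / ‖exp (2 * Real.pi * I * k.1 * ρ) - 1‖) ∧
      ∀ h : ℝ → ℂ,
        (h = fun t : ℝ => ∑' k : {k : ℤ // k ≠ 0},
            c k.1 / (exp (2 * Real.pi * I * k.1 * ρ) - 1) * exp (2 * Real.pi * I * k.1 * (t : ℂ))) →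
        Continuous h ∧ (∀ t, h (t + 1) = h t) ∧ ∀ t, h (t + ρ) - h t = a t :=
  cohomological_equation_solution_general a c δ ε K v hε hK ρ hFourier hc0 hdecay hdioph
end
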